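/- For all x ∈ (0, π), (π² − x²)/(π² + x²) < cos(x/2). -/

import Mathlib

open Real

/-!
Put `y = x / 2`. For `x ≤ 2` the Taylor bound `1 - y² / 2 < cos y` already beats the rational
function, since `π² < 16 - 4 y²` there. For `x ≥ 2` write `cos y = sin t` with `t = (π - x) / 2`,
which is at most `π / 2 - 1 < 0.58`, and use `t - t³ / 6 < sin t`; after clearing denominators both
cases are polynomial inequalities settled with `3.14 < π < 3.15`.
-/

lemma redheffer_cos_of_le_two {x : ℝ} (hx0 : 0 < x) (hx2 : x ≤ 2) :
    (π ^ 2 - x ^ 2) / (π ^ 2 + x ^ 2) < cos (x / 2) := by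
  have hgap : 0 ≤ 2 - π ^ 2 / 8 - x ^ 2 / 8 := by nlinarith [pi_lt_d2, pi_pos]
  calc (π ^ 2 - x ^ 2) / (π ^ 2 + x ^ 2) ≤ 1 - (x / 2) ^ 2 / 2 := by
        rw [div_le_iff₀ (by positivity)]
        nlinarith [mul_nonneg (sq_nonneg x) hgap]
    _ < cos (x / 2) := one_sub_sq_div_two_lt_cos (by positivity)

lemma redheffer_cos_of_two_le {x : ℝ} (hx2 : 2 ≤ x) (hxπ : x < π) :
    (π ^ 2 - x ^ 2) / (π ^ 2 + x ^ 2) < cos (x / 2) := by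
  obtain ⟨t, rfl⟩ : ∃ t, x = π - 2 * t := ⟨(π - x) / 2, by ring⟩
  have ht0 : 0 < t := by linarith
  have htsq : t ^ 2 ≤ 1 / 3 := by nlinarith [pi_lt_d2]
  have hcos : cos ((π - 2 * t) / 2) = sin t := by rw [← cos_pi_div_two_sub]; congr 1; linarith
  have hxsq : 4 ≤ (π - 2 * t) ^ 2 := by nlinarith
  have hgap : 4 * (π - t) ≤ (1 - t ^ 2 / 6) * (π ^ 2 + (π - 2 * t) ^ 2) := by
    nlinarith [pi_lt_d2, pi_gt_d2, mul_le_mul_of_nonneg_left hxsq (by linarith : 0 ≤ 1 - t ^ 2 / 6)]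
  rw [hcos]
  calc (π ^ 2 - (π - 2 * t) ^ 2) / (π ^ 2 + (π - 2 * t) ^ 2) ≤ t - t ^ 3 / 6 := by
        rw [div_le_iff₀ (by positivity)]
        nlinarith [mul_le_mul_of_nonneg_left hgap ht0.le]
    _ < sin t := sin_gt_sub_cube ht0

theorem redheffer_cos (x : ℝ) (hx : x ∈ Set.Ioo 0 π) :
    (π ^ 2 - x ^ 2) / (π ^ 2 + x ^ 2) < Real.cos (x / 2) := by
  rcases le_total x 2 with hx2 | hx2
  · exact redheffer_cos_of_le_two hx.1 hx2
  · exact redheffer_cos_of_two_le hx2 hx.2
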